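/- arXiv:2405.20395 — 3 statements merged into one kernel-verified Lean document; each statement's English description precedes it below -/
import Mathlib

section
/- Let X be an uncountable set and let G be the group of bijections of X with countable support. Then G is binate: for every finitely generated subgroup H ≤ G there exist a homomorphism ψ : H → G with [H, ψ(H)] = 1 and an element t ∈ G such that t⁻¹ ψ(h) t = h ψ(h) for all h ∈ H. -/
/-- The group of bijections of `X` with countable support, as a subgroup of the
full permutation group. -/
def countableSupport (X : Type*) : Subgroup (Equiv.Perm X) where
  carrier := {σ : Equiv.Perm X | {x : X | σ x ≠ x}.Countable}
  one_mem' := by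
    have : {x : X | (1 : Equiv.Perm X) x ≠ x} = ∅ := by
      ext x; simp
    show {x : X | (1 : Equiv.Perm X) x ≠ x}.Countable
    rw [this]; exact Set.countable_empty
  mul_mem' := by
    intro a b ha hb
    refine (ha.union hb).mono ?_
    intro x hx
    by_cases hbx : b x = x
    · exact Or.inl (by simpa [Equiv.Perm.mul_apply, hbx] using hx)
    · exact Or.inr hbx
  inv_mem' := by
    intro a ha
    refine ha.mono ?_
    intro x hx
    intro h
    exact hx (by nth_rewrite 1 [← h]; exact a.symm_apply_apply x)

/-!
Let `S` be the union of the supports of the (countably many) elements of `H`; it is countable and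
`H`-invariant. Since `X` is uncountable, `S × ℤ` embeds into `X` so that the layer `S × {0}` is `S`
itself and the other layers avoid `S`. Transported along this embedding, each `h ∈ H` acts by `h` on
layer `0` only, `ψ h` acts by `h` on all layers `n > 0`, and `t` shifts the layers by one. Then
`h` and `ψ k` have disjoint supports, and `t⁻¹ (ψ h) t` acts by `h` on all layers `n ≥ 0`, which is
`h * ψ h`.
-/

theorem Subgroup.FG.countable {G : Type*} [Group G] {H : Subgroup G} (hH : H.FG) :
    Countable H := by
  obtain ⟨T, rfl⟩ := hH
  rw [FreeGroup.closure_eq_range]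
  exact (FreeGroup.lift _).rangeRestrict_surjective.countable

theorem Set.Countable.exists_embedding_prod {X β : Type*} [Countable β] {S : Set X}
    (hS : S.Countable) (hSc : Sᶜ.Infinite) (b₀ : β) :
    ∃ ι : S × β ↪ X, (∀ s, ι (s, b₀) = s) ∧ ∀ s b, b ≠ b₀ → ι (s, b) ∉ S := by
  classical
  have := hS.to_subtype
  obtain ⟨f⟩ : Nonempty (S × β ↪ ℕ) := countable_iff_nonempty_embedding.1 inferInstance
  let g : S × β ↪ (Sᶜ : Set X) := f.trans hSc.natEmbedding
  have hg : ∀ p, (g p : X) ∉ S := fun p => (g p).2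
  let ι : S × β → X := fun p => if p.2 = b₀ then p.1 else g p
  have hι : ι.Injective := by
    rintro ⟨s, b⟩ ⟨s', b'⟩ h
    by_cases hb : b = b₀ <;> by_cases hb' : b' = b₀ <;>
      simp only [ι, hb, hb', if_true, if_false] at h
    · subst hb hb'; simp [Subtype.ext h]
    · exact absurd (h ▸ s.2) (hg _)
    · exact absurd (h ▸ s'.2) (hg _)
    · exact g.injective (Subtype.ext h)
  exact ⟨⟨ι, hι⟩, fun s => if_pos rfl, fun s b hb => by simpa [ι, hb] using hg (s, b)⟩

def positiveRayHom (M : Type*) [Monoid M] : M →* (ℤ → M) where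
  toFun x n := if 0 < n then x else 1
  map_one' := by ext n; simp
  map_mul' x y := by ext n; simp only [Pi.mul_apply]; split_ifs <;> simp

section positiveRayHom

variable {M : Type*} [Monoid M]

theorem commute_mulSingle_zero_positiveRayHom (x y : M) :
    Commute (Pi.mulSingle 0 x) (positiveRayHom M y) := by
  funext n
  by_cases hn : n = 0 <;> simp [positiveRayHom, hn]

theorem positiveRayHom_comp_addRight_one (x : M) :
    positiveRayHom M x ∘ Equiv.addRight 1 = Pi.mulSingle 0 x * positiveRayHom M x := by
  funext n
  rcases lt_trichotomy n 0 with hn | rfl | hn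
  · simp [positiveRayHom, hn.ne, show ¬ 0 < n + 1 by omega, hn.not_gt]
  · simp [positiveRayHom]
  · simp [positiveRayHom, hn.ne', hn, show 0 < n + 1 by omega]

end positiveRayHom

namespace Equiv.Perm

variable {α ι X : Type*}

def layerwise : (ι → Perm α) →* Perm (α × ι) where
  toFun := prodCongrLeft
  map_one' := rfl
  map_mul' _ _ := rfl

@[simp]
theorem layerwise_apply (f : ι → Perm α) (a : α) (i : ι) : layerwise f (a, i) = (f i a, i) := rfl

theorem prodCongr_inv_mul_layerwise_mul (e : Perm ι) (f : ι → Perm α) :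
    (prodCongr (Equiv.refl α) e)⁻¹ * layerwise f * prodCongr (Equiv.refl α) e =
      layerwise (f ∘ e) := by
  ext ⟨a, i⟩ <;> simp [Perm.mul_apply, Perm.inv_def]

theorem apply_mem_iff_of_support_subset {σ : Perm X} {S : Set X} (hσ : {x | σ x ≠ x} ⊆ S)
    (x : X) : σ x ∈ S ↔ x ∈ S := by
  by_cases hx : σ x = x
  · rw [hx]
  · exact iff_of_true (hσ fun h => hx (σ.injective h)) (hσ hx)

def restrictHom {G : Type*} [Group G] (φ : G →* Perm X) {S : Set X}
    (hφ : ∀ g, {x | φ g x ≠ x} ⊆ S) : G →* Perm S :=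
  MonoidHom.mk' (fun g => (φ g).subtypePerm (apply_mem_iff_of_support_subset (hφ g)))
    fun g k => by ext x; exact DFunLike.congr_fun (map_mul φ g k) (x : X)

theorem viaEmbedding_layerwise_mulSingle [DecidableEq ι] {S : Set X} {e : S × ι ↪ X} {i₀ : ι}
    (he₀ : ∀ s, e (s, i₀) = s) (he : ∀ s i, i ≠ i₀ → e (s, i) ∉ S)
    {σ : Perm X} (hσ : {x | σ x ≠ x} ⊆ S) (hσS : ∀ x, σ x ∈ S ↔ x ∈ S) :
    (layerwise (Pi.mulSingle i₀ (σ.subtypePerm hσS))).viaEmbedding e = σ := by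
  ext x
  by_cases hx : x ∈ Set.range e
  · obtain ⟨⟨s, i⟩, rfl⟩ := hx
    rw [viaEmbedding_apply, layerwise_apply]
    by_cases hi : i = i₀
    · subst hi; simp [he₀]
    · simp [hi, not_not.1 (mt (@hσ _) (he s i hi))]
  · rw [viaEmbedding_apply_of_notMem _ _ _ hx, not_not.1 (mt (@hσ x) ?_)]
    exact fun hxS => hx ⟨(⟨x, hxS⟩, i₀), he₀ _⟩

end Equiv.Perm

namespace countableSupport

variable {X : Type*}

noncomputable def viaEmbeddingHom {α : Type*} [Countable α] (ι : α ↪ X) :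
    Equiv.Perm α →* countableSupport X :=
  (Equiv.Perm.viaEmbeddingHom ι).codRestrict _ fun e =>
    (Set.countable_range ι).mono fun x hx => by
      by_contra hxι
      exact hx (e.viaEmbedding_apply_of_notMem ι x hxι)

theorem exists_binate_of_countable [Uncountable X] (H : Subgroup (countableSupport X))
    [Countable H] :
    ∃ (ψ : H →* countableSupport X) (t : countableSupport X),
      (∀ h k : H, Commute (h : countableSupport X) (ψ k)) ∧
      ∀ h : H, t⁻¹ * ψ h * t = h * ψ h := by
  let φ : H →* Equiv.Perm X := (countableSupport X).subtype.comp H.subtype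
  set S : Set X := ⋃ h : H, {x | φ h x ≠ x}
  have hS : S.Countable := Set.countable_iUnion fun h => h.1.2
  have hSc : Sᶜ.Infinite := fun hfin =>
    Set.not_countable_univ (by simpa using hS.union hfin.countable)
  have hφ : ∀ h, {x | φ h x ≠ x} ⊆ S := Set.subset_iUnion (fun h : H => {x | φ h x ≠ x})
  obtain ⟨ι, hι₀, hι⟩ := hS.exists_embedding_prod hSc (0 : ℤ)
  have := hS.to_subtype
  let T := viaEmbeddingHom ι
  let res := Equiv.Perm.restrictHom φ hφ
  have hT (h : H) :
      (h : countableSupport X) = T (Equiv.Perm.layerwise (Pi.mulSingle 0 (res h))) :=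
    Subtype.ext (Equiv.Perm.viaEmbedding_layerwise_mulSingle hι₀ hι (hφ h)
      (Equiv.Perm.apply_mem_iff_of_support_subset (hφ h))).symm
  refine ⟨T.comp (Equiv.Perm.layerwise.comp ((positiveRayHom _).comp res)),
    T (Equiv.prodCongr (Equiv.refl S) (Equiv.addRight 1)), fun h k => ?_, fun h => ?_⟩
  · rw [hT h]
    exact ((commute_mulSingle_zero_positiveRayHom _ _).map _).map _
  · simp only [MonoidHom.comp_apply]
    rw [hT h, ← map_inv, ← map_mul, ← map_mul, ← map_mul,
      Equiv.Perm.prodCongr_inv_mul_layerwise_mul, positiveRayHom_comp_addRight_one, map_mul]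

end countableSupport

/-- The group of countably supported bijections of an uncountable set is binate:
for every finitely generated subgroup `H` there are a homomorphism `ψ : H → G`
whose image commutes elementwise with `H`, and `t ∈ G` conjugating `ψ h` to
`h * ψ h`. -/
theorem stmt3 {X : Type*} [Uncountable X]
    (H : Subgroup ↥(countableSupport X)) (hH : H.FG) :
    ∃ (ψ : ↥H →* ↥(countableSupport X)) (t : ↥(countableSupport X)),
      (∀ h k : ↥H, Commute ((h : ↥(countableSupport X))) (ψ k)) ∧
      (∀ h : ↥H, t⁻¹ * ψ h * t = (h : ↥(countableSupport X)) * ψ h) := by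
  have := hH.countable
  exact countableSupport.exists_binate_of_countable H
end

section
/- A binate group has trivial abelianization. More precisely, if G is binate (for every finitely generated subgroup H ≤ G there are ψ : H → G with [H, ψ(H)] = 1 and t ∈ G with t⁻¹ψ(h)t = hψ(h) for all h ∈ H), then every element of G is a product of commutators. -/
/-! Apply binateness to the cyclic subgroup `⟨g⟩`: the relation `t⁻¹ ψ(g) t = g ψ(g)` says exactly
that `g = [t⁻¹, ψ(g)]`. -/

open scoped commutatorElement

theorem commutatorElement_inv_eq_of_conj_eq_mul {G : Type*} [Group G] {x y t : G}
    (h : t⁻¹ * y * t = x * y) : ⁅t⁻¹, y⁆ = x := by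
  rw [commutatorElement_def, inv_inv, h, mul_inv_cancel_right]

theorem mem_commutator_of_conj_eq_mul {G : Type*} [Group G] {x y t : G}
    (h : t⁻¹ * y * t = x * y) : x ∈ commutator G := by
  rw [← commutatorElement_inv_eq_of_conj_eq_mul h, commutator_def]
  exact Subgroup.commutator_mem_commutator (Subgroup.mem_top _) (Subgroup.mem_top _)

theorem Subgroup.fg_zpowers {G : Type*} [Group G] (g : G) : (Subgroup.zpowers g).FG :=
  ⟨{g}, by rw [Finset.coe_singleton, Subgroup.zpowers_eq_closure]⟩

/-- A binate group has trivial abelianization: if for every finitely generated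
subgroup `H ≤ G` there are `ψ : H →* G` with `[H, ψ(H)] = 1` and `t ∈ G` with
`t⁻¹ ψ(h) t = h ψ(h)` for all `h ∈ H`, then `G` is its own commutator subgroup. -/
theorem stmt11 {G : Type*} [Group G]
    (hb : ∀ H : Subgroup G, H.FG → ∃ (ψ : ↥H →* G) (t : G),
      (∀ h k : ↥H, Commute ((h : G)) (ψ k)) ∧
      (∀ h : ↥H, t⁻¹ * ψ h * t = (h : G) * ψ h)) :
    commutator G = ⊤ := by
  refine (Subgroup.eq_top_iff' _).mpr fun g => ?_
  obtain ⟨ψ, t, -, hconj⟩ := hb _ (Subgroup.fg_zpowers g)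
  exact mem_commutator_of_conj_eq_mul (hconj ⟨g, Subgroup.mem_zpowers g⟩)
end

section
/- Let G be a group with commuting ℤ-conjugates, i.e., for every finitely generated subgroup H ≤ G there exists t ∈ G such that [H, tᵖHt⁻ᵖ] = 1 for all positive integers p. Then every homogeneous quasimorphism φ : G → ℝ vanishes on commutators of elements of G: for all a, b ∈ G, φ([a,b]) = 0. -/
section Aux

variable {G : Type*} [Group G]

/-- swap lemma for right-associated products -/
private lemma qm_swap {a b : G} (h : Commute a b) (c : G) : a * (b * c) = b * (a * c) := by
  rw [← mul_assoc, h.eq, mul_assoc]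

private lemma qm_commute_conj {g x z : G} (h : Commute x z) :
    Commute (g * x * g⁻¹) (g * z * g⁻¹) := by
  rw [commute_iff_eq]
  calc (g * x * g⁻¹) * (g * z * g⁻¹) = g * (x * z) * g⁻¹ := by group
    _ = g * (z * x) * g⁻¹ := by rw [h.eq]
    _ = (g * z * g⁻¹) * (g * x * g⁻¹) := by group

private lemma qm_block_comm (A B u v : G) (hAu : Commute A u) (hAv : Commute A v)
    (hBu : Commute B u) (hBv : Commute B v) :
    (A * u)⁻¹ * (B * v)⁻¹ * (A * u) * (B * v)
      = (A⁻¹ * B⁻¹ * A * B) * (u⁻¹ * v⁻¹ * u * v) := by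
  simp only [mul_inv_rev, mul_assoc]
  rw [qm_swap (hAu.symm.inv_left.inv_right)]
  rw [qm_swap (hBv.symm.inv_left.inv_right)]
  rw [qm_swap (hBu.symm.inv_left.inv_right)]
  rw [qm_swap (hAv.symm.inv_left)]
  rw [qm_swap (hAu.symm.inv_left)]
  rw [qm_swap (hBu.symm)]
  rw [qm_swap (hBv.symm.inv_left)]
  rw [qm_swap (hBu.symm.inv_left)]

private lemma qm_nat_zero {C x : ℝ} (h : ∀ n : ℕ, (n : ℝ) * |x| ≤ C) : x = 0 := by
  by_contra hx
  have hpos : 0 < |x| := abs_pos.2 hx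
  obtain ⟨n, hn⟩ := exists_nat_gt (C / |x|)
  have := h n
  have h2 : C < (n : ℝ) * |x| := by
    rw [div_lt_iff₀ hpos] at hn; linarith
  linarith

variable (φ : G → ℝ) (C : ℝ)
  (hb : ∀ g h : G, |φ (g * h) - φ g - φ h| ≤ C)
  (hhom : ∀ g : G, ∀ n : ℤ, φ (g ^ n) = n * φ g)

include hhom in
private lemma qm_one : φ 1 = 0 := by
  have := hhom 1 0; simpa using this

include hhom in
private lemma qm_pow (g : G) (n : ℕ) : φ (g ^ n) = n * φ g := by
  have := hhom g (n : ℤ)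
  rw [zpow_natCast] at this
  simpa using this

include hhom in
private lemma qm_inv (g : G) : φ g⁻¹ = - φ g := by
  have := hhom g (-1); simpa using this

include hb hhom in
private lemma qm_add_of_commute {x y : G} (h : Commute x y) : φ (x * y) = φ x + φ y := by
  have key : φ (x * y) - φ x - φ y = 0 := by
    apply qm_nat_zero (C := C)
    intro n
    have h1 := hb (x ^ n) (y ^ n)
    rw [← h.mul_pow, qm_pow φ hhom, qm_pow φ hhom, qm_pow φ hhom] at h1
    calc (n : ℝ) * |φ (x * y) - φ x - φ y|
        = |(n : ℝ)| * |φ (x * y) - φ x - φ y| := by rw [Nat.abs_cast]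
      _ = |(n : ℝ) * (φ (x * y) - φ x - φ y)| := (abs_mul _ _).symm
      _ = |(n : ℝ) * φ (x * y) - (n : ℝ) * φ x - (n : ℝ) * φ y| := by congr 1; ring
      _ ≤ C := h1
  linarith

include hb hhom in
private lemma qm_conj (g h : G) : φ (g * h * g⁻¹) = φ h := by
  have key : φ (g * h * g⁻¹) - φ h = 0 := by
    apply qm_nat_zero (C := C + C)
    intro n
    have hpow : (g * h * g⁻¹) ^ n = g * h ^ n * g⁻¹ := by
      rw [conj_pow]
    have h1 := hb (g * h ^ n) g⁻¹
    have h2 := hb g (h ^ n)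
    rw [← hpow, qm_pow φ hhom, qm_inv φ hhom] at h1
    rw [qm_pow φ hhom] at h2
    rw [abs_le] at h1 h2
    have e : |(n : ℝ) * (φ (g * h * g⁻¹) - φ h)| = (n : ℝ) * |φ (g * h * g⁻¹) - φ h| := by
      rw [abs_mul, Nat.abs_cast]
    rw [← e, abs_le]
    constructor <;> nlinarith
  linarith

include hb hhom in
private lemma qm_commutator_bound (x y : G) : |φ (x⁻¹ * y⁻¹ * x * y)| ≤ C := by
  have hxy : φ (x * y) = φ (y * x) := by
    have := qm_conj φ C hb hhom x (y * x)
    have e : x * (y * x) * x⁻¹ = x * y := by group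
    rw [e] at this; exact this
  have hinv : φ (x⁻¹ * y⁻¹) = - φ (y * x) := by
    have : x⁻¹ * y⁻¹ = (y * x)⁻¹ := by rw [mul_inv_rev]
    rw [this, qm_inv φ hhom]
  have h1 := hb (x⁻¹ * y⁻¹) (x * y)
  have e2 : x⁻¹ * y⁻¹ * (x * y) = x⁻¹ * y⁻¹ * x * y := by group
  rw [e2, hinv, hxy] at h1
  have : φ (x⁻¹ * y⁻¹ * x * y) - - φ (y*x) - φ (y*x) = φ (x⁻¹ * y⁻¹ * x * y) := by ring
  rw [this] at h1
  exact h1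

end Aux

/-- conjugate by t^p -/
private def qmCj {G : Type*} [Group G] (t : G) (p : ℕ) (x : G) : G := t ^ p * x * (t ^ p)⁻¹

private def qmA {G : Type*} [Group G] (t a : G) : ℕ → G
  | 0 => 1
  | n + 1 => qmA t a n * qmCj t (n + 1) a

private lemma qmCj_comm_word {G : Type*} [Group G] (t : G) (p : ℕ) (x y : G) :
    qmCj t p (x⁻¹ * y⁻¹ * x * y)
      = (qmCj t p x)⁻¹ * (qmCj t p y)⁻¹ * qmCj t p x * qmCj t p y := by
  unfold qmCj; group

section Main

variable {G : Type*} [Group G] {H : Subgroup G} {t : G}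
  (ht : ∀ p : ℕ, 0 < p → ∀ h ∈ H, ∀ k ∈ H, Commute h (t ^ p * k * (t ^ p)⁻¹))

include ht in
private lemma qm_cross {p q : ℕ} (hpq : p < q) {x y : G} (hx : x ∈ H) (hy : y ∈ H) :
    Commute (qmCj t p x) (qmCj t q y) := by
  have hd : 0 < q - p := by omega
  have h0 := ht (q - p) hd x hx y hy
  have h1 : Commute (t ^ p * x * (t ^ p)⁻¹)
      (t ^ p * (t ^ (q - p) * y * (t ^ (q - p))⁻¹) * (t ^ p)⁻¹) := qm_commute_conj h0
  have e : t ^ p * (t ^ (q - p) * y * (t ^ (q - p))⁻¹) * (t ^ p)⁻¹ = t ^ q * y * (t ^ q)⁻¹ := by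
    have : t ^ q = t ^ p * t ^ (q - p) := by rw [← pow_add]; congr 1; omega
    rw [this]; group
  rw [e] at h1
  exact h1

include ht in
private lemma qmA_commute {a : G} (ha : a ∈ H) :
    ∀ n q : ℕ, n < q → ∀ x ∈ H, Commute (qmA t a n) (qmCj t q x) := by
  intro n
  induction n with
  | zero => intro q x _ _; exact Commute.one_left _
  | succ k ih =>
    intro q hq x hx
    show Commute (qmA t a k * qmCj t (k + 1) a) (qmCj t q x)
    exact (ih q (by omega) x hx).mul_left (qm_cross ht (by omega) ha hx)

end Main

/-- If `G` has commuting ℤ-conjugates (for every finitely generated subgroup `H`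
there is `t` such that `H` and `tᵖ H t⁻ᵖ` commute elementwise for all `p ≥ 1`),
then every homogeneous quasimorphism `φ : G → ℝ` vanishes on commutators. -/
theorem stmt12 {G : Type*} [Group G]
    (hccc : ∀ H : Subgroup G, H.FG → ∃ t : G, ∀ p : ℕ, 0 < p →
      ∀ h ∈ H, ∀ k ∈ H, Commute h (t ^ p * k * (t ^ p)⁻¹))
    (φ : G → ℝ)
    (hq : ∃ C : ℝ, ∀ g h : G, |φ (g * h) - φ g - φ h| ≤ C)
    (hhom : ∀ g : G, ∀ n : ℤ, φ (g ^ n) = n * φ g) :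
    ∀ a b : G, φ (a⁻¹ * b⁻¹ * a * b) = 0 := by
  obtain ⟨C, hb⟩ := hq
  intro a b
  set H : Subgroup G := Subgroup.closure {a, b} with hH
  have hFG : H.FG := (Subgroup.fg_iff H).2 ⟨{a, b}, rfl, (Set.finite_singleton b).insert a⟩
  obtain ⟨t, ht⟩ := hccc H hFG
  have ha : a ∈ H := Subgroup.subset_closure (by simp)
  have hbmem : b ∈ H := Subgroup.subset_closure (by simp)
  -- the key induction
  have hZ : ∀ n : ℕ,
      φ ((qmA t a n)⁻¹ * (qmA t b n)⁻¹ * qmA t a n * qmA t b n)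
        = n * φ (a⁻¹ * b⁻¹ * a * b) := by
    intro n
    induction n with
    | zero =>
      show φ ((1:G)⁻¹ * (1:G)⁻¹ * 1 * 1) = _
      simp [qm_one φ hhom]
    | succ k ih =>
      have hAu := qmA_commute ht ha k (k + 1) (by omega) a ha
      have hAv := qmA_commute ht ha k (k + 1) (by omega) b hbmem
      have hBu := qmA_commute ht hbmem k (k + 1) (by omega) a ha
      have hBv := qmA_commute ht hbmem k (k + 1) (by omega) b hbmem
      set A := qmA t a k
      set B := qmA t b k
      set u := qmCj t (k + 1) a
      set v := qmCj t (k + 1) b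
      show φ ((A * u)⁻¹ * (B * v)⁻¹ * (A * u) * (B * v)) = _
      rw [qm_block_comm A B u v hAu hAv hBu hBv]
      have h1 : Commute (A⁻¹ * B⁻¹ * A * B) u :=
        ((hAu.inv_left.mul_left hBu.inv_left).mul_left hAu).mul_left hBu
      have h2 : Commute (A⁻¹ * B⁻¹ * A * B) v :=
        ((hAv.inv_left.mul_left hBv.inv_left).mul_left hAv).mul_left hBv
      have hcomm : Commute (A⁻¹ * B⁻¹ * A * B) (u⁻¹ * v⁻¹ * u * v) :=
        ((h1.inv_right.mul_right h2.inv_right).mul_right h1).mul_right h2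
      rw [qm_add_of_commute φ C hb hhom hcomm, ih]
      have hw : u⁻¹ * v⁻¹ * u * v = qmCj t (k + 1) (a⁻¹ * b⁻¹ * a * b) :=
        (qmCj_comm_word t (k + 1) a b).symm
      have hconj : φ (qmCj t (k + 1) (a⁻¹ * b⁻¹ * a * b)) = φ (a⁻¹ * b⁻¹ * a * b) :=
        qm_conj φ C hb hhom _ _
      rw [hw, hconj]
      push_cast
      ring
  -- the bound
  apply qm_nat_zero (C := C)
  intro n
  have hbound := qm_commutator_bound φ C hb hhom (qmA t a n) (qmA t b n)
  rw [hZ n] at hbound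
  calc (n : ℝ) * |φ (a⁻¹ * b⁻¹ * a * b)|
      = |(n : ℝ)| * |φ (a⁻¹ * b⁻¹ * a * b)| := by rw [Nat.abs_cast]
    _ = |(n : ℝ) * φ (a⁻¹ * b⁻¹ * a * b)| := (abs_mul _ _).symm
    _ ≤ C := hbound
end
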